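/- Moreau decomposition for the sliding projection: let μ ≥ 0 and let τ ∈ E satisfy τ_t ≠ 0, ‖τ_t‖ ≥ μ * τ_n and μ * ‖τ_t‖ ≥ -τ_n, and set p = τ - ((‖τ_t‖ - μ * τ_n)/(1 + μ^2)) • ((1/‖τ_t‖) • τ_t - μ • n). Then p lies on the boundary of the Coulomb cone, i.e. ‖p_t‖ = μ * p_n; the residual q = τ - p satisfies μ * ‖q_t‖ ≤ -q_n (q lies in the polar cone of K_μ); and ⟪p, q⟫ = 0. -/

import Mathlib

open scoped InnerProductSpace

noncomputable section

/-- The ambient space `E = ℝ³`. -/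
abbrev E := EuclideanSpace ℝ (Fin 3)

/-- Normal component of `x` relative to the unit normal `n`. -/
def xn (n x : E) : ℝ := ⟪x, n⟫_ℝ

/-- Tangential component of `x` relative to the unit normal `n`. -/
def xt (n x : E) : E := x - (⟪x, n⟫_ℝ) • n

/-- The Coulomb cone with friction coefficient `μ`. -/
def Kcone (n : E) (μ : ℝ) : Set E := {r | ‖xt n r‖ ≤ μ * xn n r}

/-! The residual `q = τ - p` is `c • s - (c * μ) • n`, where `s` is the unit tangential direction of
`τ` and `c = (‖τ_t‖ - μ τ_n) / (1 + μ²)`; so both `p` and `q` have explicit coordinates in the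
orthonormal pair `(s, n)`, and all three claims reduce to the identity
`c * (1 + μ²) = ‖τ_t‖ - μ τ_n` together with the signs `c ≥ 0` and `‖τ_t‖ - c ≥ 0`. -/

section Components

variable {n : E}

theorem inner_xt_normal (hn : ‖n‖ = 1) (x : E) : ⟪xt n x, n⟫_ℝ = 0 := by
  simp [xt, inner_sub_left, real_inner_smul_left, hn]

theorem xt_add_xn_smul (x : E) : xt n x + xn n x • n = x := by
  simp [xt, xn]

theorem xn_smul_add_smul {s : E} (hn : ‖n‖ = 1) (hs : ⟪s, n⟫_ℝ = 0) (α β : ℝ) :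
    xn n (α • s + β • n) = β := by
  simp [xn, inner_add_left, real_inner_smul_left, hs, hn]

theorem xt_smul_add_smul {s : E} (hn : ‖n‖ = 1) (hs : ⟪s, n⟫_ℝ = 0) (α β : ℝ) :
    xt n (α • s + β • n) = α • s := by
  rw [xt, ← xn, xn_smul_add_smul hn hs, add_sub_cancel_right]

theorem norm_xt_smul_add_smul {s : E} (hn : ‖n‖ = 1) (hs₁ : ‖s‖ = 1) (hs : ⟪s, n⟫_ℝ = 0)
    (α β : ℝ) : ‖xt n (α • s + β • n)‖ = |α| := by
  rw [xt_smul_add_smul hn hs, norm_smul, hs₁, mul_one, Real.norm_eq_abs]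

theorem inner_smul_add_smul {s : E} (hn : ‖n‖ = 1) (hs₁ : ‖s‖ = 1) (hs : ⟪s, n⟫_ℝ = 0)
    (α β α' β' : ℝ) : ⟪α • s + β • n, α' • s + β' • n⟫_ℝ = α * α' + β * β' := by
  have hns : ⟪n, s⟫_ℝ = 0 := by rw [real_inner_comm, hs]
  simp only [inner_add_left, inner_add_right, real_inner_smul_left, real_inner_smul_right,
    real_inner_self_eq_norm_sq, hn, hs₁, hs, hns]
  ring

end Components

/-- Moreau decomposition for the sliding projection: the projected point `p` lies
on the boundary of the Coulomb cone, the residual `q = τ - p` lies in the polar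
cone, and `p ⊥ q`. -/
theorem coulomb_moreau_decomposition_sliding (n : E) (hn : ‖n‖ = 1) (μ : ℝ) (hμ : 0 ≤ μ)
    (τ : E) (hτt : xt n τ ≠ 0)
    (h1 : μ * xn n τ ≤ ‖xt n τ‖) (h2 : -(xn n τ) ≤ μ * ‖xt n τ‖)
    (p q : E)
    (hp : p = τ - ((‖xt n τ‖ - μ * xn n τ) / (1 + μ ^ 2)) • ((1 / ‖xt n τ‖) • xt n τ - μ • n))
    (hq : q = τ - p) :
    ‖xt n p‖ = μ * xn n p ∧ μ * ‖xt n q‖ ≤ -(xn n q) ∧ ⟪p, q⟫_ℝ = 0 := by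
  set a := ‖xt n τ‖
  set b := xn n τ
  set c := (a - μ * b) / (1 + μ ^ 2)
  set s := (1 / a) • xt n τ
  have ha : 0 < a := norm_pos_iff.mpr hτt
  have hs₁ : ‖s‖ = 1 := by
    rw [norm_smul, Real.norm_eq_abs, abs_of_pos (one_div_pos.mpr ha), one_div_mul_cancel ha.ne']
  have hs : ⟪s, n⟫_ℝ = 0 := by rw [real_inner_smul_left, inner_xt_normal hn, mul_zero]
  have hτ : τ = a • s + b • n := by
    rw [smul_smul, mul_one_div_cancel ha.ne', one_smul, xt_add_xn_smul]
  have hq' : q = c • s + (-(c * μ)) • n := by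
    rw [hq, hp, sub_sub_cancel]
    module
  have hp' : p = (a - c) • s + (b + c * μ) • n := by
    rw [show p = τ - q by rw [hq, sub_sub_cancel], hτ, hq']
    module
  have hden : 0 < 1 + μ ^ 2 := by positivity
  have hc : c * (1 + μ ^ 2) = a - μ * b := div_mul_cancel₀ _ hden.ne'
  have hc₀ : 0 ≤ c := div_nonneg (by linarith) hden.le
  have hpn₀ : 0 ≤ b + c * μ :=
    (mul_nonneg_iff_of_pos_right hden).mp (by linear_combination h2 - μ * hc)
  have hac : a - c = μ * (b + c * μ) := by linear_combination -hc
  rw [hp', hq', norm_xt_smul_add_smul hn hs₁ hs, norm_xt_smul_add_smul hn hs₁ hs,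
    xn_smul_add_smul hn hs, xn_smul_add_smul hn hs, inner_smul_add_smul hn hs₁ hs,
    abs_of_nonneg (hac ▸ mul_nonneg hμ hpn₀), abs_of_nonneg hc₀]
  exact ⟨hac, by linarith [mul_comm μ c], by linear_combination -c * hc⟩
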